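/- arXiv:1410.2054 — 2 statements merged into one kernel-verified Lean document; each statement's English description precedes it below -/
import Mathlib

section
/- If gcd(m,n) = 1, then Σ_{k=1}^n gcd(k,n)·e^{-2πikm/n} = φ(n), the Euler totient function of n. -/
open Finset

/-!
With `ζ` the primitive `n`-th root of unity `exp (-2πim/n)`, write
`gcd k n = ∑_{d ∣ gcd k n} φ d` and swap the sums: the coefficient of `φ d` is the sum of `ζ ^ k` over the multiples `k` of `d`,
i.e. the sum of all `(n / d)`-th roots of unity, which vanishes unless `d = n`.
-/

theorem Finset.sum_range_filter_dvd {M : Type*} [AddCommMonoid M] (f : ℕ → M) {d n : ℕ}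
    (hd : d ∣ n) : ∑ k ∈ range n with d ∣ k, f k = ∑ j ∈ range (n / d), f (d * j) := by
  obtain rfl | hd0 := eq_or_ne d 0
  · simp [Nat.eq_zero_of_zero_dvd hd]
  have hfilter : {k ∈ range n | d ∣ k} = (range (n / d)).image (d * ·) := by
    ext k
    simp only [mem_filter, mem_range, mem_image]
    constructor
    · rintro ⟨hk, j, rfl⟩
      exact ⟨j, (Nat.lt_div_iff_mul_lt' hd j).2 hk, rfl⟩
    · rintro ⟨j, hj, rfl⟩
      exact ⟨(Nat.lt_div_iff_mul_lt' hd j).1 hj, dvd_mul_right d j⟩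
  rw [hfilter, sum_image fun a _ b _ h => Nat.eq_of_mul_eq_mul_left (Nat.pos_of_ne_zero hd0) h]

theorem Finset.sum_Icc_one_eq_sum_range {M : Type*} [AddCommMonoid M] {f : ℕ → M} {n : ℕ}
    (h : f n = f 0) : ∑ k ∈ Icc 1 n, f k = ∑ k ∈ range n, f k := by
  rcases n with _ | n
  · simp
  rw [← Ico_add_one_right_eq_Icc, sum_Ico_eq_sum_range, add_tsub_cancel_right, sum_range_succ,
    sum_range_succ', add_comm 1 n, h]
  simp only [add_comm 1]

theorem Nat.cast_gcd_eq_sum_filter_totient {R : Type*} [Semiring R] (k : ℕ) {n : ℕ}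
    (hn : n ≠ 0) :
    (k.gcd n : R) = ∑ d ∈ n.divisors with d ∣ k, (d.totient : R) := by
  rw [← Nat.sum_totient (k.gcd n), Nat.cast_sum,
    ← Nat.divisors_filter_dvd_of_dvd hn (Nat.gcd_dvd_right k n)]
  refine sum_congr (filter_congr fun d hd => ?_) fun _ _ => rfl
  simp [Nat.dvd_gcd_iff, Nat.dvd_of_mem_divisors hd]

namespace IsPrimitiveRoot

variable {R : Type*} [CommRing R] [IsDomain R] {ζ : R} {n : ℕ}

theorem sum_range_filter_dvd_pow (hζ : IsPrimitiveRoot ζ n) {d : ℕ} (hd : d ∈ n.divisors) :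
    ∑ k ∈ range n with d ∣ k, ζ ^ k = if d = n then 1 else 0 := by
  obtain ⟨hdn, hn⟩ := Nat.mem_divisors.1 hd
  have hd0 : d ≠ 0 := ne_zero_of_dvd_ne_zero hn hdn
  simp_rw [sum_range_filter_dvd _ hdn, pow_mul]
  split_ifs with hdn'
  · simp [hdn', Nat.div_self (Nat.pos_of_ne_zero hn)]
  · refine (hζ.pow_of_dvd hd0 hdn).geom_sum_eq_zero ?_
    have hq : 0 < n / d :=
      Nat.div_pos (Nat.le_of_dvd (Nat.pos_of_ne_zero hn) hdn) (Nat.pos_of_ne_zero hd0)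
    have hq' : n / d ≠ 1 := fun h => hdn' (Nat.eq_of_dvd_of_div_eq_one hdn h)
    omega

theorem sum_range_gcd_mul_pow (hζ : IsPrimitiveRoot ζ n) :
    ∑ k ∈ range n, (k.gcd n : R) * ζ ^ k = n.totient := by
  obtain rfl | hn := eq_or_ne n 0
  · simp
  calc ∑ k ∈ range n, (k.gcd n : R) * ζ ^ k
      = ∑ k ∈ range n, ∑ d ∈ n.divisors with d ∣ k, (d.totient : R) * ζ ^ k := by
        simp_rw [Nat.cast_gcd_eq_sum_filter_totient _ hn, sum_mul]
    _ = ∑ d ∈ n.divisors, (d.totient : R) * ∑ k ∈ range n with d ∣ k, ζ ^ k := by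
        simp_rw [mul_sum]
        exact sum_comm' fun k d => by simp only [mem_filter, mem_range, Nat.mem_divisors]; tauto
    _ = n.totient := by
        rw [sum_congr rfl fun d hd => by rw [hζ.sum_range_filter_dvd_pow hd]]
        simp [Nat.mem_divisors_self n hn]

end IsPrimitiveRoot

theorem dft_gcd_coprime_eq_totient_general (n m : ℕ)
    (h : Nat.gcd m n = 1) :
    ∑ k ∈ Finset.Icc 1 n, (Nat.gcd k n : ℂ) *
        Complex.exp (-(2 * Real.pi * Complex.I * k * m / n)) =
      (Nat.totient n : ℂ) := by
  obtain rfl | hn := eq_or_ne n 0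
  · simp
  set ζ := Complex.exp (-(2 * Real.pi * Complex.I * m / n))
  have hζ : IsPrimitiveRoot ζ n := by
    simpa only [← Complex.exp_neg, ← mul_div_assoc] using
      (Complex.isPrimitiveRoot_exp_of_coprime m n hn h).inv
  have hpow (k : ℕ) : Complex.exp (-(2 * Real.pi * Complex.I * k * m / n)) = ζ ^ k := by
    rw [← Complex.exp_nat_mul]
    ring_nf
  simp_rw [hpow]
  rw [sum_Icc_one_eq_sum_range (by simp [hζ.pow_eq_one]), hζ.sum_range_gcd_mul_pow]

theorem dft_gcd_coprime_eq_totient (n m : ℕ) (hn : 1 ≤ n) (hm : 1 ≤ m)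
    (h : Nat.gcd m n = 1) :
    ∑ k ∈ Finset.Icc 1 n, (Nat.gcd k n : ℂ) *
        Complex.exp (-(2 * Real.pi * Complex.I * k * m / n)) =
      (Nat.totient n : ℂ) :=
  dft_gcd_coprime_eq_totient_general n m h
end

section
/- For a prime p, s ≥ 1, t ≥ 0, and a multiplicative function f, Σ_{k=1}^{p^s} f(gcd(k,p^s))·e^{-2πik·u·p^t/p^s} = f(p^s) + (p−1)·Σ_{b=1}^{min(t,s)} p^{b-1}·f(p^{s-b}) − f(p^{s-t-1})·p^t·(1 − [t ≥ s]), where gcd(u,p) = 1. -/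
/-!
Write `f (gcd k p^s)` as a telescoping sum of the differences `G i - G (i + 1)` over the
indices `i ≤ s` with `p^(s-i) ∣ k`, where `G i = f (p^(s-i))` for `i ≤ s` and `G (s + 1) = 0`
(`descPowValue`). Exchanging the sums, the exponential sum over the multiples of `p^(s-i)` is a
full sum of `p^i`-th roots of unity, equal to `p^i` if `p^i ∣ u p^t`, i.e. `i ≤ t` since
`p ∤ u`, and to `0` otherwise. Summation by parts in `Σ_{i ≤ min s t} (G i - G (i + 1)) p^i`
gives the right-hand side.
-/

open Finset

lemma sum_range_sub_mul_pow_eq {R : Type*} [CommRing R] (G : ℕ → R) (x : R) (m : ℕ) :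
    ∑ i ∈ range (m + 1), (G i - G (i + 1)) * x ^ i =
      G 0 + (x - 1) * ∑ i ∈ Icc 1 m, x ^ (i - 1) * G i - G (m + 1) * x ^ m := by
  induction m with
  | zero => simp
  | succ m ih =>
    rw [sum_range_succ, ih, sum_Icc_succ_top (by omega), Nat.add_sub_cancel, pow_succ]
    ring

def descPowValue {M : Type*} [Zero M] (φ : ℕ → M) (p s i : ℕ) : M :=
  if i ≤ s then φ (p ^ (s - i)) else 0

lemma apply_gcd_prime_pow_eq_sum {M : Type*} [AddCommGroup M] (φ : ℕ → M) {p : ℕ}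
    (hp : p.Prime) (s k : ℕ) :
    φ (Nat.gcd k (p ^ s)) = ∑ i ∈ range (s + 1),
      if p ^ (s - i) ∣ k then descPowValue φ p s i - descPowValue φ p s (i + 1) else 0 := by
  obtain ⟨v, hvs, hgcd⟩ := (Nat.dvd_prime_pow hp).mp (Nat.gcd_dvd_right k (p ^ s))
  have hdvd_iff (i : ℕ) : p ^ (s - i) ∣ k ↔ s - v ≤ i := by
    have hpow : p ^ (s - i) ∣ k ↔ p ^ (s - i) ∣ p ^ v := by
      rw [← hgcd, Nat.dvd_gcd_iff, and_iff_left (pow_dvd_pow p (Nat.sub_le s i))]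
    rw [hpow, Nat.pow_dvd_pow_iff_le_right hp.one_lt]
    omega
  have hfilter : {i ∈ range (s + 1) | s - v ≤ i} = Ico (s - v) (s + 1) := by
    ext i
    simp only [mem_filter, mem_range, mem_Ico]
    omega
  have htelescope := sum_Ico_sub (-descPowValue φ p s) (by omega : s - v ≤ s + 1)
  simp only [Pi.neg_apply, neg_sub_neg] at htelescope
  simp only [hdvd_iff, ← sum_filter, hfilter, htelescope]
  simp [descPowValue, hgcd, Nat.sub_sub_self hvs]

lemma sum_apply_gcd_prime_pow_mul {R : Type*} [CommRing R] (φ E : ℕ → R) {p : ℕ} (hp : p.Prime)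
    (s : ℕ) (S : Finset ℕ) :
    ∑ k ∈ S, φ (Nat.gcd k (p ^ s)) * E k = ∑ i ∈ range (s + 1),
      (descPowValue φ p s i - descPowValue φ p s (i + 1)) * ∑ k ∈ S with p ^ (s - i) ∣ k, E k := by
  simp_rw [apply_gcd_prime_pow_eq_sum φ hp, sum_mul, ite_mul, zero_mul, mul_sum, sum_filter]
  exact sum_comm

open Complex in
lemma sum_Icc_exp_neg_two_pi_I (n a : ℕ) (hn : n ≠ 0) :
    ∑ j ∈ Icc 1 n, exp (-(2 * Real.pi * I * j * a / n)) = if n ∣ a then (n : ℂ) else 0 := by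
  obtain ⟨ζ, hζ, hζ_def⟩ : ∃ ζ, IsPrimitiveRoot ζ n ∧ ζ = (exp (2 * Real.pi * I / n))⁻¹ :=
    ⟨_, (isPrimitiveRoot_exp n hn).inv, rfl⟩
  have hterm (j : ℕ) : exp (-(2 * Real.pi * I * j * a / n)) = (ζ ^ a) ^ j := by
    rw [hζ_def, ← pow_mul, inv_pow, ← Complex.exp_nat_mul, ← exp_neg]
    congr 1
    push_cast
    ring
  have hsum (w : ℂ) : ∑ j ∈ Icc 1 n, w ^ j = w * ∑ j ∈ range n, w ^ j := by
    rw [← Ico_add_one_right_eq_Icc, sum_Ico_eq_sum_range, mul_sum]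
    simp [pow_add, add_comm 1, mul_comm]
  simp_rw [hterm, hsum]
  split_ifs with hdvd
  · simp [(hζ.pow_eq_one_iff_dvd a).mpr hdvd]
  · have hw : ζ ^ a ≠ 1 := fun h => hdvd ((hζ.pow_eq_one_iff_dvd a).mp h)
    rw [geom_sum_eq hw, ← pow_mul, mul_comm a, pow_mul, hζ.pow_eq_one, one_pow]
    simp

lemma sum_Icc_filter_dvd {M : Type*} [AddCommMonoid M] (g : ℕ → M) {d : ℕ} (hd : 0 < d) (m : ℕ) :
    ∑ k ∈ Icc 1 (d * m) with d ∣ k, g k = ∑ j ∈ Icc 1 m, g (d * j) := by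
  have himage : {k ∈ Icc 1 (d * m) | d ∣ k} = (Icc 1 m).image (d * ·) := by
    ext k
    simp only [mem_filter, mem_Icc, mem_image]
    constructor
    · rintro ⟨⟨hk1, hkm⟩, j, rfl⟩
      exact ⟨j, ⟨Nat.pos_of_mul_pos_left hk1, Nat.le_of_mul_le_mul_left hkm hd⟩, rfl⟩
    · rintro ⟨j, ⟨hj1, hjm⟩, rfl⟩
      exact ⟨⟨Nat.mul_pos hd hj1, Nat.mul_le_mul_left d hjm⟩, dvd_mul_right d j⟩
  rw [himage, sum_image fun _ _ _ _ h => Nat.eq_of_mul_eq_mul_left hd h]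

lemma Nat.Coprime.pow_dvd_mul_pow_iff {p u : ℕ} (hu : Nat.Coprime u p) (hp : p.Prime) (i t : ℕ) :
    p ^ i ∣ u * p ^ t ↔ i ≤ t := by
  refine ⟨fun h => ?_, fun h => (pow_dvd_pow p h).mul_left u⟩
  by_contra! hti
  have : p ^ t * p ∣ p ^ t * u := by
    rw [← pow_succ, mul_comm]
    exact (pow_dvd_pow p hti).trans h
  exact hp.one_lt.ne' (hu.symm.eq_one_of_dvd (Nat.dvd_of_mul_dvd_mul_left (pow_pos hp.pos t) this))

open Complex in
lemma sum_Icc_filter_pow_dvd_exp {p u : ℕ} (hp : p.Prime) (hu : Nat.Coprime u p) {i s : ℕ}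
    (his : i ≤ s) (t : ℕ) :
    ∑ k ∈ Icc 1 (p ^ s) with p ^ (s - i) ∣ k,
        exp (-(2 * Real.pi * I * k * (u * p ^ t) / (p ^ s))) = if i ≤ t then (p : ℂ) ^ i else 0 := by
  have hs : p ^ s = p ^ (s - i) * p ^ i := by rw [← pow_add, Nat.sub_add_cancel his]
  have hterm (j : ℕ) : exp (-(2 * Real.pi * I * (p ^ (s - i) * j : ℕ) * (u * p ^ t) / (p ^ s))) =
      exp (-(2 * Real.pi * I * j * (u * p ^ t : ℕ) / (p ^ i : ℕ))) := by
    have hp0 : (p : ℂ) ≠ 0 := by exact_mod_cast hp.ne_zero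
    rw [← Nat.cast_pow p s, hs]
    push_cast
    field_simp
  rw [hs, sum_Icc_filter_dvd _ (pow_pos hp.pos _)]
  simp_rw [hterm, sum_Icc_exp_neg_two_pi_I _ _ (pow_ne_zero i hp.ne_zero),
    hu.pow_dvd_mul_pow_iff hp]
  push_cast
  rfl

theorem dft_f_gcd_prime_power_general (f : ℕ → ℂ)
    (p s t u : ℕ) (hp : p.Prime) (hu : Nat.Coprime u p) :
    ∑ k ∈ Finset.Icc 1 (p ^ s), f (Nat.gcd k (p ^ s)) *
        Complex.exp (-(2 * Real.pi * Complex.I * k * (u * p ^ t) / (p ^ s))) =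
      f (p ^ s) +
        ((p : ℂ) - 1) * ∑ b ∈ Finset.Icc 1 (min t s),
          (p : ℂ) ^ (b - 1) * f (p ^ (s - b)) -
        f (p ^ (s - t - 1)) * (p : ℂ) ^ t * (if s ≤ t then 0 else 1) := by
  set G := descPowValue f p s
  calc _ = ∑ i ∈ range (s + 1), (G i - G (i + 1)) * if i ≤ t then (p : ℂ) ^ i else 0 := by
        rw [sum_apply_gcd_prime_pow_mul f _ hp]
        refine sum_congr rfl fun i hi => ?_
        rw [sum_Icc_filter_pow_dvd_exp hp hu (mem_range_succ_iff.mp hi)]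
    _ = ∑ i ∈ range (min t s + 1), (G i - G (i + 1)) * (p : ℂ) ^ i := by
        simp_rw [mul_ite, mul_zero]
        rw [← sum_filter]
        congr 1
        ext i
        simp only [mem_filter, mem_range]
        omega
    _ = G 0 + ((p : ℂ) - 1) * ∑ i ∈ Icc 1 (min t s), (p : ℂ) ^ (i - 1) * G i -
          G (min t s + 1) * (p : ℂ) ^ min t s := sum_range_sub_mul_pow_eq G _ _
    _ = _ := by
        have hmid : ∑ i ∈ Icc 1 (min t s), (p : ℂ) ^ (i - 1) * G i =
            ∑ i ∈ Icc 1 (min t s), (p : ℂ) ^ (i - 1) * f (p ^ (s - i)) :=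
          sum_congr rfl fun i hi => by
            rw [mem_Icc] at hi
            simp only [G, descPowValue, if_pos (show i ≤ s by omega)]
        have htail : G (min t s + 1) * (p : ℂ) ^ min t s =
            f (p ^ (s - t - 1)) * (p : ℂ) ^ t * (if s ≤ t then 0 else 1) := by
          rcases le_or_gt s t with hst | hts
          · simp [G, descPowValue, hst]
          · simp [G, descPowValue, hts, hts.le, Nat.not_le.mpr hts, Nat.sub_sub]
        rw [hmid, htail]
        simp [G, descPowValue]

theorem dft_f_gcd_prime_power (f : ℕ → ℂ) (hf1 : f 1 = 1)
    (hf : ∀ a b : ℕ, Nat.Coprime a b → f (a * b) = f a * f b)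
    (p s t u : ℕ) (hp : p.Prime) (hs : 1 ≤ s) (hu : Nat.Coprime u p) :
    ∑ k ∈ Finset.Icc 1 (p ^ s), f (Nat.gcd k (p ^ s)) *
        Complex.exp (-(2 * Real.pi * Complex.I * k * (u * p ^ t) / (p ^ s))) =
      f (p ^ s) +
        ((p : ℂ) - 1) * ∑ b ∈ Finset.Icc 1 (min t s),
          (p : ℂ) ^ (b - 1) * f (p ^ (s - b)) -
        f (p ^ (s - t - 1)) * (p : ℂ) ^ t * (if s ≤ t then 0 else 1) :=
  dft_f_gcd_prime_power_general f p s t u hp hu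
end
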